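/- Let r, s, m be integers with r ≥ s ≥ 3 and m ≥ 3, set n = 2r + s, and let f = z_1^m + z_1^{m-1}(z_2 + ⋯ + z_r) + z_{r+1}^m + ⋯ + z_n^m in the polynomial ring ℂ[z_1, …, z_n]. Then the set of points a ∈ ℂ^n at which all n partial derivatives ∂f/∂z_1, …, ∂f/∂z_n vanish simultaneously equals the coordinate-linear subspace {a ∈ ℂ^n : a_1 = 0 and a_j = 0 for all r+1 ≤ j ≤ n}; in particular this common zero locus is a complex-linear subspace of dimension r − 1. -/

import Mathlib

/-!
For `j ∈ S` the partial derivative `∂f/∂z_j` is `z_{i₀}^{m-1}`, and for `j ∈ T` it is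
`m z_j^{m-1}`; with `S` nonempty and disjoint from `T` this forces `a_{i₀} = 0` and `a_j = 0` on `T`
at a critical point `a`. Conversely, since `m - 2 ≥ 1`, every partial derivative vanishes there.
The critical locus is therefore the kernel of the restriction to the coordinates outside `S`,
of dimension `|S| = r - 1`.
-/

open MvPolynomial

namespace MvPolynomial

variable {R σ : Type*} [CommSemiring R] [DecidableEq σ]

noncomputable def soaresPoly (i₀ : σ) (S T : Finset σ) (m : ℕ) : MvPolynomial σ R :=
  X i₀ ^ m + X i₀ ^ (m - 1) * ∑ j ∈ S, X j + ∑ j ∈ T, X j ^ m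

theorem eval_pderiv_soaresPoly (i₀ : σ) (S T : Finset σ) (m : ℕ) (a : σ → R) (i : σ) :
    eval a (pderiv i (soaresPoly i₀ S T m)) =
      (if i = i₀ then m * a i₀ ^ (m - 1) + (m - 1 : ℕ) * a i₀ ^ (m - 1 - 1) * ∑ j ∈ S, a j
        else 0) +
      (if i ∈ S then a i₀ ^ (m - 1) else 0) + (if i ∈ T then m * a i ^ (m - 1) else 0) := by
  simp only [soaresPoly, map_add, Derivation.leibniz_pow, pderiv_X, Pi.single_apply, smul_eq_mul,
    mul_ite, mul_one, mul_zero, smul_ite, nsmul_eq_mul, Derivation.leibniz, map_sum,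
    eq_comm, Finset.sum_ite_eq, apply_ite (eval a), map_mul, map_natCast, map_pow, eval_X, map_zero]
  split_ifs <;> ring

theorem setOf_eval_pderiv_soaresPoly_eq_zero {K : Type*} [Field K] [CharZero K]
    {i₀ : σ} {S T : Finset σ} {m : ℕ} (hm : 3 ≤ m) (hi₀ : i₀ ∉ S) (hST : Disjoint S T)
    (hS : S.Nonempty) :
    {a : σ → K | ∀ i, eval a (pderiv i (soaresPoly i₀ S T m)) = 0} =
      {a | a i₀ = 0 ∧ ∀ j ∈ T, a j = 0} := by
  have hm0 : (m : K) ≠ 0 := by exact_mod_cast (by omega : m ≠ 0)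
  ext a
  simp only [Set.mem_ofPred_eq, eval_pderiv_soaresPoly]
  constructor
  · intro h
    obtain ⟨k, hk⟩ := hS
    have ha₀ : a i₀ = 0 := by
      have := h k
      rw [if_neg (ne_of_mem_of_not_mem hk hi₀), if_pos hk, if_neg (Finset.disjoint_left.mp hST hk),
        zero_add, add_zero] at this
      exact pow_eq_zero_iff (by omega) |>.mp this
    refine ⟨ha₀, fun j hj => ?_⟩
    obtain rfl | hj₀ := eq_or_ne j i₀
    · exact ha₀
    have := h j
    rw [if_neg hj₀, if_neg (Finset.disjoint_right.mp hST hj), if_pos hj, zero_add, zero_add] at this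
    exact pow_eq_zero_iff (by omega) |>.mp ((mul_eq_zero.mp this).resolve_left hm0)
  · rintro ⟨ha₀, hT⟩ i
    simpa [ha₀, show m - 1 ≠ 0 by omega, show m - 1 - 1 ≠ 0 by omega] using
      fun hi => Or.inr (hT i hi)

end MvPolynomial

theorem exists_submodule_coe_eq_setOf_forall_notMem_eq_zero {K σ : Type*} [Field K] [Fintype σ]
    [DecidableEq σ] (V : Finset σ) :
    ∃ L : Submodule K (σ → K), (L : Set (σ → K)) = {a | ∀ j ∉ V, a j = 0} ∧
      Module.finrank K L = V.card := by
  let restrict := LinearMap.funLeft K K ((↑) : (Vᶜ : Finset σ) → σ)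
  refine ⟨LinearMap.ker restrict, ?_, ?_⟩
  · ext a
    simp [restrict, funext_iff, LinearMap.funLeft]
  · have h := restrict.finrank_range_add_finrank_ker
    rw [LinearMap.range_eq_top.mpr
        (LinearMap.funLeft_surjective_of_injective K K _ Subtype.val_injective), finrank_top,
      Module.finrank_fintype_fun_eq_card, Module.finrank_fintype_fun_eq_card, Fintype.card_coe,
      Finset.card_compl] at h
    have := V.card_le_univ
    omega

theorem Fin.card_filter_one_le_and_lt {n r : ℕ} (h : r ≤ n) :
    Finset.card {j : Fin n | 1 ≤ (j : ℕ) ∧ (j : ℕ) < r} = r - 1 := by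
  rw [← Finset.card_map Fin.valEmbedding]
  convert Nat.card_Ico 1 r
  ext k
  simp only [Finset.mem_map, Finset.mem_filter_univ, Fin.valEmbedding_apply, Finset.mem_Ico]
  exact ⟨by rintro ⟨j, hj, rfl⟩; exact hj, fun hk => ⟨⟨k, by omega⟩, hk, rfl⟩⟩

/-- Soares' example, singular set of the foliation `𝒢_s` defined by
`df`. Let `r ≥ s ≥ 3`, `m ≥ 3`, `n = 2r + s`, and
`f = z₁^m + z₁^{m-1}(z₂ + ⋯ + z_r) + z_{r+1}^m + ⋯ + z_n^m ∈ ℂ[z₁, …, z_n]`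
(variables indexed by `Fin n`, with `z_{i+1} = X i`). Then the common zero locus of the
`n` partial derivatives `∂f/∂z_i` is exactly the coordinate-linear subspace
`{a : a₁ = 0 and a_j = 0 for r+1 ≤ j ≤ n}`; in particular it is a complex-linear
subspace of dimension `r - 1`. -/
theorem stmt0 (r s m n : ℕ) (hsr : s ≤ r) (hs : 3 ≤ s) (hm : 3 ≤ m)
    (hn : n = 2 * r + s)
    (f : MvPolynomial (Fin n) ℂ)
    (hf : f = X (⟨0, by omega⟩ : Fin n) ^ m
        + X (⟨0, by omega⟩ : Fin n) ^ (m - 1) *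
            (∑ j ∈ Finset.univ.filter (fun j : Fin n => 1 ≤ (j : ℕ) ∧ (j : ℕ) < r), X j)
        + ∑ j ∈ Finset.univ.filter (fun j : Fin n => r ≤ (j : ℕ)), X j ^ m) :
    {a : Fin n → ℂ | ∀ i : Fin n, eval a (pderiv i f) = 0}
        = {a : Fin n → ℂ | a ⟨0, by omega⟩ = 0 ∧ ∀ j : Fin n, r ≤ (j : ℕ) → a j = 0} ∧
      ∃ L : Submodule ℂ (Fin n → ℂ),
        (L : Set (Fin n → ℂ))
            = {a : Fin n → ℂ | a ⟨0, by omega⟩ = 0 ∧ ∀ j : Fin n, r ≤ (j : ℕ) → a j = 0} ∧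
        Module.finrank ℂ L = r - 1 := by
  let i₀ : Fin n := ⟨0, by omega⟩
  let S : Finset (Fin n) := {j | 1 ≤ (j : ℕ) ∧ (j : ℕ) < r}
  let T : Finset (Fin n) := {j | r ≤ (j : ℕ)}
  have hi₀ : i₀ ∉ S := by simp [S, i₀]
  have hST : Disjoint S T := Finset.disjoint_filter.mpr fun _ _ h => by omega
  have hS : S.Nonempty := ⟨⟨1, by omega⟩,
    Finset.mem_filter.mpr ⟨Finset.mem_univ _, le_rfl, show 1 < r by omega⟩⟩
  have hnotS : ∀ j : Fin n, j ∉ S ↔ j = i₀ ∨ r ≤ (j : ℕ) := fun j => by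
    simp only [S, i₀, Finset.mem_filter, Finset.mem_univ, true_and, not_and, not_lt, Fin.ext_iff]
    omega
  have hsing : {a : Fin n → ℂ | ∀ i, eval a (pderiv i f) = 0} =
      {a | a i₀ = 0 ∧ ∀ j ∈ T, a j = 0} :=
    hf ▸ setOf_eval_pderiv_soaresPoly_eq_zero hm hi₀ hST hS
  obtain ⟨L, hL, hdim⟩ := exists_submodule_coe_eq_setOf_forall_notMem_eq_zero (K := ℂ) S
  refine ⟨by simpa [T] using hsing, L, ?_, ?_⟩
  · rw [hL]
    ext a
    simp only [Set.mem_ofPred_eq, hnotS, or_imp, forall_and, forall_eq]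
    rfl
  · rw [hdim, Fin.card_filter_one_le_and_lt (by omega)]
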